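/- If P is a prime implication filter of an MV-algebra that does not contain all counits, then there exists a prime implication filter Q incomparable to P. -/

import Mathlib

/-- An MV-algebra `(α, ⊕, ¬, 0)` with the standard axioms. -/
class MV (α : Type*) extends Add α, Neg α, Zero α where
  add_assoc : ∀ a b c : α, a + (b + c) = (a + b) + c
  add_comm : ∀ a b : α, a + b = b + a
  add_zero : ∀ a : α, a + 0 = a
  neg_neg : ∀ a : α, - -a = a
  add_neg_zero : ∀ a : α, a + -(0 : α) = -(0 : α)
  luk : ∀ a b : α, -(-a + b) + b = -(-b + a) + a

namespace MV

variable {α : Type*} [MV α]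

/-- The top element `1 = ¬0`. -/
def one (α : Type*) [MV α] : α := -(0 : α)

/-- Implication `x → y = ¬x ⊕ y`. -/
def imp (a b : α) : α := -a + b

/-- Strong conjunction `x ⊗ y = ¬(¬x ⊕ ¬y)`. -/
def otimes (a b : α) : α := -(-a + -b)

/-- Join `x ∨ y = (x → y) → y`. -/
def sup (a b : α) : α := imp (imp a b) b

/-- Meet `x ∧ y = ¬(¬x ∨ ¬y)`. -/
def inf (a b : α) : α := -(sup (-a) (-b))

/-- Order: `x ≤ y` iff `x → y = 1`. -/
def le (a b : α) : Prop := imp a b = one α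

/-- Strict order. -/
def lt (a b : α) : Prop := le a b ∧ a ≠ b

/-- `n`-fold `⊗`-power. -/
def pow (a : α) : ℕ → α
  | 0 => one α
  | n + 1 => otimes a (pow a n)

/-- An implication filter: a lattice filter closed under `⊗`. -/
def IsImpFilter (F : Set α) : Prop :=
  one α ∈ F ∧ (∀ x ∈ F, ∀ y : α, le x y → y ∈ F) ∧
    (∀ x ∈ F, ∀ y ∈ F, inf x y ∈ F) ∧ (∀ x ∈ F, ∀ y ∈ F, otimes x y ∈ F)

/-- A prime implication filter: proper and `x ∨ y ∈ F → x ∈ F ∨ y ∈ F`. -/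
def IsPrime (F : Set α) : Prop :=
  IsImpFilter F ∧ F ≠ Set.univ ∧ ∀ x y : α, sup x y ∈ F → x ∈ F ∨ y ∈ F

/-- A minimal prime implication filter. -/
def IsMinimalPrime (F : Set α) : Prop :=
  IsPrime F ∧ ∀ G : Set α, IsPrime G → G ⊆ F → G = F

/-- A maximal proper implication filter. -/
def IsMaximal (F : Set α) : Prop :=
  IsImpFilter F ∧ F ≠ Set.univ ∧
    ∀ G : Set α, IsImpFilter G → G ≠ Set.univ → F ⊆ G → G = F

/-- A counit: `u < 1` joining to `1` with some `v < 1`. -/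
def IsCounit (u : α) : Prop :=
  lt u (one α) ∧ ∃ v : α, lt v (one α) ∧ sup u v = one α

/-- The implication filter generated by a set. -/
def gen (S : Set α) : Set α := ⋂₀ {F : Set α | IsImpFilter F ∧ S ⊆ F}

/-- The Conrad filter: the implication filter generated by all counits. -/
def conrad (α : Type*) [MV α] : Set α := gen {u : α | IsCounit u}

/-- The localizing filter `ℓ(P)`, generated by `{x → p : p ∈ P, x ∉ P}`. -/
def locFilter (P : Set α) : Set α :=
  gen {z : α | ∃ x : α, x ∉ P ∧ ∃ p ∈ P, z = imp x p}

end MV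

open MV

/-!
The counit `u ∉ P` comes with `v < 1` and `u ∨ v = 1`; primality of `P` puts `v` in `P`.
Since `u ∨ v = 1` forces `uⁿ ∨ v = 1` for every `n`, no power of `u` lies below `v`, so the
implication filter generated by `u` avoids `v`. A filter maximal among those containing `u` and
avoiding `v` is prime: were `x ∨ y ∈ M` with `x, y ∉ M`, maximality would give `m ⊗ xⁿ ≤ v` and
`m' ⊗ yᵏ ≤ v` with `m, m' ∈ M`, and `(x ∨ y)ⁿ⁺ᵏ ≤ xⁿ ∨ yᵏ` would put `v` in `M`. This prime filter
contains `u ∉ P` and misses `v ∈ P`.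
-/

namespace MV

variable {α : Type*} [MV α]

theorem zero_add (a : α) : 0 + a = a := by rw [MV.add_comm, MV.add_zero]

theorem add_one (a : α) : a + one α = one α := add_neg_zero a

theorem one_add (a : α) : one α + a = one α := by rw [MV.add_comm, add_one]

theorem neg_one : -(one α) = 0 := MV.neg_neg 0

theorem neg_add_self (a : α) : -a + a = one α := by
  have h := luk (one α) a
  rwa [neg_one, zero_add, add_one] at h

theorem le_refl (a : α) : le a a := neg_add_self a

theorem le_one (a : α) : le a (one α) := add_one (-a)

theorem le_iff_exists_add {a b : α} : le a b ↔ ∃ c, a + c = b := by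
  constructor
  · intro h
    have hluk := luk a b
    rw [show -a + b = one α from h, neg_one, zero_add] at hluk
    exact ⟨-(-b + a), (MV.add_comm _ _).trans hluk.symm⟩
  · rintro ⟨c, rfl⟩
    show -a + (a + c) = one α
    rw [MV.add_assoc, neg_add_self, one_add]

theorem le_add_right (a b : α) : le a (a + b) := le_iff_exists_add.2 ⟨b, rfl⟩

theorem le_add_left (a b : α) : le b (a + b) := le_iff_exists_add.2 ⟨a, MV.add_comm b a⟩

theorem le_trans {a b c : α} (hab : le a b) (hbc : le b c) : le a c := by
  obtain ⟨x, rfl⟩ := le_iff_exists_add.1 hab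
  obtain ⟨y, rfl⟩ := le_iff_exists_add.1 hbc
  exact le_iff_exists_add.2 ⟨x + y, MV.add_assoc a x y⟩

theorem add_le_add_left (c : α) {a b : α} (h : le a b) : le (c + a) (c + b) := by
  obtain ⟨x, rfl⟩ := le_iff_exists_add.1 h
  exact le_iff_exists_add.2 ⟨x, (MV.add_assoc c a x).symm⟩

theorem add_le_add_right {a b : α} (h : le a b) (c : α) : le (a + c) (b + c) := by
  rw [MV.add_comm a, MV.add_comm b]
  exact add_le_add_left c h

theorem neg_le_neg {a b : α} (h : le a b) : le (-b) (-a) := by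
  show - -b + -a = one α
  rw [MV.neg_neg, MV.add_comm]
  exact h

theorem le_neg_of_le_neg {a b : α} (h : le a (-b)) : le b (-a) := by
  show -b + -a = one α
  rw [MV.add_comm]
  exact h

theorem sup_comm (a b : α) : sup a b = sup b a := luk a b

theorem sup_eq_right {a b : α} (h : le a b) : sup a b = b := by
  show -(-a + b) + b = b
  rw [show -a + b = one α from h, neg_one, zero_add]

theorem le_sup_right (a b : α) : le b (sup a b) := le_add_left _ b

theorem le_sup_left (a b : α) : le a (sup a b) := sup_comm b a ▸ le_sup_right b a

theorem le_antisymm {a b : α} (hab : le a b) (hba : le b a) : a = b := by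
  rw [← sup_eq_right hab, sup_comm, sup_eq_right hba]

theorem sup_le_sup_right {a c : α} (h : le a c) (b : α) : le (sup a b) (sup c b) :=
  add_le_add_right (neg_le_neg (add_le_add_right (neg_le_neg h) b)) b

theorem sup_le {a b c : α} (hac : le a c) (hbc : le b c) : le (sup a b) c := by
  have hb : le (sup b c) c := by rw [sup_eq_right hbc]; exact le_refl c
  exact le_trans (sup_le_sup_right hac b) (sup_comm c b ▸ hb)

theorem sup_le_sup {a a' b b' : α} (ha : le a a') (hb : le b b') : le (sup a b) (sup a' b') :=
  sup_le (le_trans ha (le_sup_left _ _)) (le_trans hb (le_sup_right _ _))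

theorem otimes_comm (a b : α) : otimes a b = otimes b a := by
  unfold otimes
  rw [MV.add_comm]

theorem otimes_assoc (a b c : α) : otimes (otimes a b) c = otimes a (otimes b c) := by
  simp only [otimes, MV.neg_neg, MV.add_assoc]

theorem otimes_one (a : α) : otimes a (one α) = a := by
  unfold otimes
  rw [neg_one, MV.add_zero, MV.neg_neg]

theorem one_otimes (a : α) : otimes (one α) a = a := otimes_comm a _ ▸ otimes_one a

theorem otimes_le_otimes {a a' b b' : α} (ha : le a a') (hb : le b b') :
    le (otimes a b) (otimes a' b') :=
  neg_le_neg (le_trans (add_le_add_right (neg_le_neg ha) _) (add_le_add_left _ (neg_le_neg hb)))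

theorem otimes_le_left (a b : α) : le (otimes a b) a := by
  simpa only [otimes_one] using otimes_le_otimes (le_refl a) (le_one b)

theorem otimes_le_right (a b : α) : le (otimes a b) b :=
  otimes_comm b a ▸ otimes_le_left b a

theorem otimes_otimes_otimes_comm (a b c d : α) :
    otimes (otimes a b) (otimes c d) = otimes (otimes a c) (otimes b d) := by
  rw [otimes_assoc, otimes_assoc, ← otimes_assoc b, ← otimes_assoc c, otimes_comm b c]

theorem otimes_le_inf (a b : α) : le (otimes a b) (inf a b) :=
  le_neg_of_le_neg <| (MV.neg_neg (-a + -b)).symm ▸ sup_le (le_add_right _ _) (le_add_left _ _)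

theorem le_imp_iff {a b c : α} : le a (imp b c) ↔ le (otimes a b) c := by
  have h : imp (otimes a b) c = imp a (imp b c) := by
    simp only [imp, otimes, MV.neg_neg, MV.add_assoc]
  exact ⟨fun hle => h.trans hle, fun hle => h.symm.trans hle⟩

theorem sup_otimes_le (a b c : α) :
    le (otimes (sup a b) c) (sup (otimes a c) (otimes b c)) :=
  le_imp_iff.1 <| sup_le (le_imp_iff.2 (le_sup_left _ _)) (le_imp_iff.2 (le_sup_right _ _))

theorem otimes_sup_le (c a b : α) :
    le (otimes c (sup a b)) (sup (otimes c a) (otimes c b)) := by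
  simpa only [otimes_comm c] using sup_otimes_le a b c

theorem otimes_sup_le_sup_otimes_left (c a b : α) :
    le (otimes c (sup a b)) (sup (otimes c a) b) :=
  le_trans (otimes_sup_le c a b) (sup_le_sup (le_refl _) (otimes_le_right c b))

theorem otimes_sup_le_sup_otimes_right (c a b : α) :
    le (otimes c (sup a b)) (sup a (otimes c b)) :=
  le_trans (otimes_sup_le c a b) (sup_le_sup (otimes_le_right c a) (le_refl _))

theorem pow_add (a : α) (m n : ℕ) : pow a (m + n) = otimes (pow a m) (pow a n) := by
  induction m with
  | zero => rw [Nat.zero_add]; exact (one_otimes _).symm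
  | succ m ih =>
    rw [Nat.succ_add]
    show otimes a (pow a (m + n)) = otimes (otimes a (pow a m)) (pow a n)
    rw [ih, otimes_assoc]

theorem pow_sup_le (a b : α) (n k : ℕ) :
    le (pow (sup a b) (n + k)) (sup (pow a n) (pow b k)) := by
  induction n generalizing k with
  | zero => exact le_trans (le_one _) (le_sup_left _ _)
  | succ n ihn =>
    induction k with
    | zero => exact le_trans (le_one _) (le_sup_right _ _)
    | succ k ihk =>
      have ha : le (otimes a (pow (sup a b) (n + 1 + k))) (sup (pow a (n + 1)) (pow b (k + 1))) :=
        le_trans (otimes_le_otimes (le_refl a) (by rw [Nat.add_right_comm]; exact ihn (k + 1)))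
          (otimes_sup_le_sup_otimes_left _ _ _)
      have hb : le (otimes b (pow (sup a b) (n + 1 + k))) (sup (pow a (n + 1)) (pow b (k + 1))) :=
        le_trans (otimes_le_otimes (le_refl b) ihk) (otimes_sup_le_sup_otimes_right _ _ _)
      exact le_trans (sup_otimes_le a b _) (sup_le ha hb)

theorem sup_eq_otimes_neg_add (a b : α) : sup a b = otimes a (-b) + b := by
  simp only [sup, imp, otimes, MV.neg_neg]

theorem otimes_neg_eq_of_sup_eq_one {u v : α} (h : sup u v = one α) : otimes u (-v) = -v := by
  refine le_antisymm (otimes_le_right u (-v)) ?_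
  show - -v + otimes u (-v) = one α
  rwa [MV.neg_neg, MV.add_comm, ← sup_eq_otimes_neg_add]

theorem sup_pow_eq_one {u v : α} (h : sup u v = one α) (n : ℕ) : sup (pow u n) v = one α := by
  have hpow : otimes (pow u n) (-v) = -v := by
    induction n with
    | zero => exact one_otimes _
    | succ n ih =>
      show otimes (otimes u (pow u n)) (-v) = -v
      rw [otimes_assoc, ih, otimes_neg_eq_of_sup_eq_one h]
  rw [sup_eq_otimes_neg_add, hpow, neg_add_self]

theorem not_pow_le_of_sup_eq_one {u v : α} (h : sup u v = one α) (hv : v ≠ one α) (n : ℕ) :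
    ¬le (pow u n) v := fun hle => hv (sup_eq_right hle ▸ sup_pow_eq_one h n)

namespace IsImpFilter

variable {F : Set α}

theorem one_mem (hF : IsImpFilter F) : one α ∈ F := hF.1

theorem mem_of_le (hF : IsImpFilter F) {x y : α} (hx : x ∈ F) (hxy : le x y) : y ∈ F :=
  hF.2.1 x hx y hxy

theorem otimes_mem (hF : IsImpFilter F) {x y : α} (hx : x ∈ F) (hy : y ∈ F) : otimes x y ∈ F :=
  hF.2.2.2 x hx y hy

theorem pow_mem (hF : IsImpFilter F) {x : α} (hx : x ∈ F) : ∀ n, pow x n ∈ F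
  | 0 => hF.one_mem
  | n + 1 => hF.otimes_mem hx (pow_mem hF hx n)

theorem of_otimes_mem (one_mem : one α ∈ F) (mem_of_le : ∀ x ∈ F, ∀ y, le x y → y ∈ F)
    (otimes_mem : ∀ x ∈ F, ∀ y ∈ F, otimes x y ∈ F) : IsImpFilter F :=
  ⟨one_mem, mem_of_le, fun x hx y hy => mem_of_le _ (otimes_mem x hx y hy) _ (otimes_le_inf x y),
    otimes_mem⟩

end IsImpFilter

theorem isImpFilter_singleton_one : IsImpFilter {one α} :=
  .of_otimes_mem rfl (fun _ hx y hxy => le_antisymm (le_one y) (hx ▸ hxy))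
    (fun _ hx _ hy => by rw [hx, hy, otimes_one]; rfl)

theorem isImpFilter_sUnion {c : Set (Set α)} (hc : IsChain (· ⊆ ·) c) (hne : c.Nonempty)
    (hF : ∀ F ∈ c, IsImpFilter F) : IsImpFilter (⋃₀ c) := by
  obtain ⟨F₀, hF₀⟩ := hne
  refine .of_otimes_mem ⟨F₀, hF₀, (hF F₀ hF₀).one_mem⟩
    (fun x ⟨F, hFc, hx⟩ y hxy => ⟨F, hFc, (hF F hFc).mem_of_le hx hxy⟩) ?_
  rintro x ⟨F, hFc, hx⟩ y ⟨G, hGc, hy⟩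
  rcases hc.total hFc hGc with hFG | hGF
  · exact ⟨G, hGc, (hF G hGc).otimes_mem (hFG hx) hy⟩
  · exact ⟨F, hFc, (hF F hFc).otimes_mem hx (hGF hy)⟩

/-- The implication filter generated by `F ∪ {x}`, when `F` is an implication filter. -/
def adjoin (F : Set α) (x : α) : Set α :=
  {z | ∃ m ∈ F, ∃ n, le (otimes m (pow x n)) z}

theorem subset_adjoin (F : Set α) (x : α) : F ⊆ adjoin F x :=
  fun m hm => ⟨m, hm, 0, otimes_le_left m _⟩

theorem mem_adjoin_self {F : Set α} (hF : IsImpFilter F) (x : α) : x ∈ adjoin F x :=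
  ⟨one α, hF.one_mem, 1, by rw [one_otimes]; exact otimes_le_left x (one α)⟩

theorem IsImpFilter.adjoin {F : Set α} (hF : IsImpFilter F) (x : α) :
    IsImpFilter (adjoin F x) := by
  refine .of_otimes_mem (subset_adjoin F x hF.one_mem)
    (fun z ⟨m, hm, n, hz⟩ y hzy => ⟨m, hm, n, le_trans hz hzy⟩) ?_
  rintro z ⟨m, hm, n, hz⟩ w ⟨m', hm', k, hw⟩
  refine ⟨otimes m m', hF.otimes_mem hm hm', n + k, ?_⟩
  rw [pow_add, otimes_otimes_otimes_comm]
  exact otimes_le_otimes hz hw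

theorem otimes_pow_sup_le {m m' x y g : α} {n k : ℕ} (hx : le (otimes m (pow x n)) g)
    (hy : le (otimes m' (pow y k)) g) :
    le (otimes (otimes m m') (pow (sup x y) (n + k))) g :=
  have hsup : le (sup (otimes (otimes m m') (pow x n)) (otimes (otimes m m') (pow y k))) g :=
    sup_le (le_trans (otimes_le_otimes (otimes_le_left m m') (le_refl _)) hx)
      (le_trans (otimes_le_otimes (otimes_le_right m m') (le_refl _)) hy)
  le_trans (otimes_le_otimes (le_refl _) (pow_sup_le x y n k))
    (le_trans (otimes_sup_le _ _ _) hsup)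

theorem isPrime_of_maximal {g : α} {M : Set α}
    (hM : Maximal (fun F => IsImpFilter F ∧ g ∉ F) M) : IsPrime M := by
  obtain ⟨⟨hMf, hgM⟩, hmax⟩ := hM
  have hadjoin : ∀ x ∉ M, ∃ m ∈ M, ∃ n, le (otimes m (pow x n)) g := fun x hx => by
    by_contra hg
    exact hx (hmax ⟨hMf.adjoin x, hg⟩ (subset_adjoin M x) (mem_adjoin_self hMf x))
  refine ⟨hMf, fun h => hgM (h ▸ Set.mem_univ g), fun x y hxy => ?_⟩
  by_contra! hxyM
  obtain ⟨m, hm, n, hx⟩ := hadjoin x hxyM.1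
  obtain ⟨m', hm', k, hy⟩ := hadjoin y hxyM.2
  exact hgM <| hMf.mem_of_le
    (hMf.otimes_mem (hMf.otimes_mem hm hm') (hMf.pow_mem hxy (n + k))) (otimes_pow_sup_le hx hy)

theorem exists_isPrime_superset_not_mem {F : Set α} {g : α} (hF : IsImpFilter F) (hg : g ∉ F) :
    ∃ Q, IsPrime Q ∧ F ⊆ Q ∧ g ∉ Q := by
  obtain ⟨M, hFM, hM⟩ := zorn_subset_nonempty {G | IsImpFilter G ∧ g ∉ G}
    (fun c hcS hc hne => ⟨⋃₀ c, ⟨isImpFilter_sUnion hc hne fun G hG => (hcS hG).1,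
      fun ⟨G, hG, hgG⟩ => (hcS hG).2 hgG⟩, fun _ => Set.subset_sUnion_of_mem⟩) F ⟨hF, hg⟩
  exact ⟨M, isPrime_of_maximal hM, hFM, hM.1.2⟩

end MV

/-- A prime filter not containing all counits has an incomparable prime. -/
theorem exists_incomparable_prime {α : Type*} [MV α] (P : Set α) (hP : IsPrime P)
    (h : ¬∀ u : α, IsCounit u → u ∈ P) :
    ∃ Q : Set α, IsPrime Q ∧ ¬Q ⊆ P ∧ ¬P ⊆ Q := by
  push Not at h
  obtain ⟨u, ⟨-, v, hv, huv⟩, huP⟩ := h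
  have hvP : v ∈ P := (hP.2.2 u v (huv ▸ hP.1.one_mem)).resolve_left huP
  have hvu : v ∉ adjoin {one α} u := by
    rintro ⟨_, rfl, n, hle⟩
    exact not_pow_le_of_sup_eq_one huv hv.2 n (by rwa [one_otimes] at hle)
  obtain ⟨Q, hQ, huQ, hvQ⟩ :=
    exists_isPrime_superset_not_mem (isImpFilter_singleton_one.adjoin u) hvu
  exact ⟨Q, hQ, fun hQP => huP (hQP (huQ (mem_adjoin_self isImpFilter_singleton_one u))),
    fun hPQ => hvQ (hPQ hvP)⟩
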